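/- (Voronovskaya-type theorem) Let f ∈ C²[0,∞) be bounded with bounded, uniformly continuous second derivative, and fix a ≥ 0, x ≥ 0, 0 ≤ α ≤ β. Then lim_{n→∞} n·(L_{n,a}^{α,β}(f;x) − f(x)) = (α − βx + ax/(1+x))·f'(x) + ((x²+x)/2)·f''(x). -/

import Mathlib

noncomputable def rising (n i : ℕ) : ℝ := ∏ j ∈ Finset.range i, ((n : ℝ) + j)

noncomputable def pk (n : ℕ) (a : ℝ) (k : ℕ) : ℝ :=
  ∑ i ∈ Finset.range (k + 1), (k.choose i : ℝ) * rising n i * a ^ (k - i)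

noncomputable def W (n : ℕ) (a x : ℝ) (k : ℕ) : ℝ :=
  Real.exp (-(a * x) / (1 + x)) * (pk n a k / (k.factorial : ℝ)) * x ^ k / (1 + x) ^ (k + n)

noncomputable def L (n : ℕ) (a α β : ℝ) (f : ℝ → ℝ) (x : ℝ) : ℝ :=
  ∑' k : ℕ, W n a x k * f (((k : ℝ) + α) / ((n : ℝ) + β))

open Filter Topology Finset Nat Set

/-!
`W n a x` is the law of `P + N`, where `P` is Poisson of mean `a x / (1 + x)` and `N` is negative
binomial, a sum of `n` independent geometric variables of mean `x`: its generating function is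
`exp (a t (z - 1)) * ((1 - t) / (1 - t z)) ^ n` with `t = x / (1 + x)`. The factorial moments are
therefore `x ^ r * pk n (a / (1 + x)) r`, the variance is `n x (1 + x) + a x / (1 + x)` and the
fourth central moment is `O(n²)`, which gives the moment limits at the nodes `(k + α) / (n + β)`.
Since `f''` is bounded and uniformly continuous, the second-order Taylor remainder at `t` is at most
`ε (t - x)² + C_ε (t - x)⁴`; after multiplying by `n` and averaging, it contributes at most
`ε (x² + x)` in the limit, for every `ε > 0`.
-/

lemma rising_succ (n i : ℕ) : rising n (i + 1) = n * rising (n + 1) i := by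
  simp only [rising, prod_range_succ', Nat.cast_add, Nat.cast_one, CharP.cast_eq_zero, add_zero]
  rw [mul_comm]
  congr 1
  exact prod_congr rfl fun j _ => by ring

lemma rising_nonneg (n i : ℕ) : 0 ≤ rising n i :=
  prod_nonneg fun _ _ => by positivity

lemma rising_eq_factorial_mul_choose (m i : ℕ) : rising (m + 1) i = i ! * (i + m).choose m := by
  rw [← Nat.choose_symm_add, add_comm i m, rising, ← Nat.cast_mul,
    ← Nat.ascFactorial_eq_factorial_mul_choose, Nat.ascFactorial_eq_prod_range]
  push_cast
  exact prod_congr rfl fun j _ => by ring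

lemma hasSum_rising_mul_pow_div_factorial (n : ℕ) {t : ℝ} (ht : |t| < 1) :
    HasSum (fun i => rising n i * t ^ i / i !) (1 / (1 - t) ^ n) := by
  cases n with
  | zero =>
    convert hasSum_ite_eq 0 (1 : ℝ) using 2 with i
    · cases i with
      | zero => simp [rising]
      | succ i => simp [rising_succ]
    · simp
  | succ m =>
    refine (hasSum_choose_mul_geometric_of_norm_lt_one m (r := t) ht).congr_fun fun i => ?_
    rw [rising_eq_factorial_mul_choose]
    field_simp

lemma pk_zero (n : ℕ) (a : ℝ) : pk n a 0 = 1 := by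
  simp [pk, rising]

lemma pk_succ (n : ℕ) (a : ℝ) (k : ℕ) :
    pk n a (k + 1) = a * pk n a k + n * pk (n + 1) a k := by
  have h := sum_choose_succ_mul (fun i j => rising n i * a ^ j) k
  simp only [← mul_assoc] at h
  rw [pk, h, pk, pk, mul_sum, mul_sum]
  congr 1
  · refine sum_congr rfl fun i hi => ?_
    rw [Nat.sub_add_comm (Nat.lt_succ_iff.mp (mem_range.mp hi)), pow_succ]
    ring
  · refine sum_congr rfl fun i _ => ?_
    rw [rising_succ]
    ring

lemma hasSum_pk_mul_pow_div_factorial (n : ℕ) (a : ℝ) {t : ℝ} (ht : |t| < 1) :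
    HasSum (fun k => pk n a k * t ^ k / k !) (Real.exp (a * t) / (1 - t) ^ n) := by
  have hr := hasSum_rising_mul_pow_div_factorial n ht
  have hr' := hasSum_rising_mul_pow_div_factorial n (t := |t|) (by simpa using ht)
  have he := Real.summable_pow_div_factorial (|a * t|)
  have H := hasSum_sum_range_mul_of_summable_norm'
    (hr'.summable.congr fun i => by
      rw [Real.norm_eq_abs, abs_div, abs_mul, abs_pow, abs_of_nonneg (rising_nonneg n i),
        Nat.abs_cast])
    hr.summable
    (he.congr fun j => by rw [Real.norm_eq_abs, abs_div, abs_pow, Nat.abs_cast])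
    (NormedSpace.expSeries_div_hasSum_exp (a * t)).summable
  rw [hr.tsum_eq, (NormedSpace.expSeries_div_hasSum_exp (a * t)).tsum_eq, ← Real.exp_eq_exp_ℝ,
    one_div_mul_eq_div] at H
  refine H.congr_fun fun k => ?_
  rw [pk, sum_mul, sum_div]
  refine sum_congr rfl fun i hi => ?_
  have hik : i ≤ k := Nat.lt_succ_iff.mp (mem_range.mp hi)
  have hpow : t ^ k = t ^ i * t ^ (k - i) := by rw [← pow_add, Nat.add_sub_cancel' hik]
  have hfac : (k ! : ℝ) = k.choose i * i ! * (k - i)! := by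
    exact_mod_cast (Nat.choose_mul_factorial_mul_factorial hik).symm
  have hchoose := (Nat.choose_pos hik).ne'
  rw [hpow, hfac, mul_pow]
  field_simp

lemma cast_descFactorial_eq_prod (k r : ℕ) :
    (k.descFactorial r : ℝ) = ∏ j ∈ range r, ((k : ℝ) - j) := by
  rw [← descPochhammer_eval_eq_descFactorial, descPochhammer_eval_eq_prod_range]

section Weights

variable {a x : ℝ}

lemma W_nonneg (n : ℕ) (ha : 0 ≤ a) (hx : 0 ≤ x) (k : ℕ) : 0 ≤ W n a x k := by
  have : 0 ≤ pk n a k := sum_nonneg fun i _ => by have := rising_nonneg n i; positivity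
  unfold W
  positivity

lemma hasSum_W (n : ℕ) (hx : 0 ≤ x) : HasSum (W n a x) 1 := by
  have hx1 : (1 + x) ≠ 0 := by positivity
  have ht : |x / (1 + x)| < 1 := by
    rw [abs_of_nonneg (by positivity), div_lt_one (by positivity)]
    linarith
  have H := (hasSum_pk_mul_pow_div_factorial n a ht).mul_left
    (Real.exp (-(a * x) / (1 + x)) / (1 + x) ^ n)
  have hval : Real.exp (-(a * x) / (1 + x)) / (1 + x) ^ n *
      (Real.exp (a * (x / (1 + x))) / (1 - x / (1 + x)) ^ n) = 1 := by
    rw [neg_div, ← mul_div_assoc, Real.exp_neg,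
      show 1 - x / (1 + x) = (1 + x)⁻¹ by field_simp; ring, inv_pow, div_inv_eq_mul]
    field_simp
  rw [hval] at H
  refine H.congr_fun fun k => ?_
  rw [W, div_pow, pow_add]
  field_simp

lemma W_succ (n : ℕ) (hx : 0 ≤ x) (k : ℕ) :
    (k + 1) * W n a x (k + 1) = x * (a / (1 + x) * W n a x k + n * W (n + 1) a x k) := by
  have hx1 : (1 + x) ≠ 0 := by positivity
  rw [W, W, W, pk_succ, Nat.factorial_succ, show k + 1 + n = k + n + 1 by omega,
    show k + (n + 1) = k + n + 1 by omega]
  push_cast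
  field_simp
  ring

lemma hasSum_W_mul_descFactorial (hx : 0 ≤ x) (r n : ℕ) :
    HasSum (fun k => W n a x k * (k.descFactorial r : ℝ)) (x ^ r * pk n (a / (1 + x)) r) := by
  induction r generalizing n with
  | zero => simpa [pk_zero] using hasSum_W n hx
  | succ r ih =>
    rw [← hasSum_nat_add_iff' 1]
    have hval : x ^ (r + 1) * pk n (a / (1 + x)) (r + 1) -
        ∑ k ∈ range 1, W n a x k * (k.descFactorial (r + 1) : ℝ) =
        x * (a / (1 + x)) * (x ^ r * pk n (a / (1 + x)) r) +
          x * n * (x ^ r * pk (n + 1) (a / (1 + x)) r) := by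
      simp only [range_one, sum_singleton, Nat.zero_descFactorial_succ, pk_succ]
      push_cast
      ring
    rw [hval]
    refine (((ih n).mul_left _).add ((ih (n + 1)).mul_left _)).congr_fun fun k => ?_
    rw [Nat.succ_descFactorial_succ]
    push_cast
    linear_combination (k.descFactorial r : ℝ) * W_succ (a := a) n hx k

lemma hasSum_W_mul_sub_mean_add (hx : 0 ≤ x) (n : ℕ) (d : ℝ) :
    HasSum (fun k => W n a x k * ((k : ℝ) - x * (a / (1 + x) + n) + d)) d := by
  have h r := hasSum_W_mul_descFactorial (a := a) hx r n
  convert! (h 1).add ((h 0).mul_left (d - x * (a / (1 + x) + n))) using 1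
  · funext k
    simp only [cast_descFactorial_eq_prod, prod_range_succ, prod_range_zero]
    ring
  · simp only [pk_succ, pk_zero]
    ring

lemma hasSum_W_mul_sub_mean_add_sq (hx : 0 ≤ x) (n : ℕ) (d : ℝ) :
    HasSum (fun k => W n a x k * ((k : ℝ) - x * (a / (1 + x) + n) + d) ^ 2)
      (n * x * (1 + x) + a / (1 + x) * x + d ^ 2) := by
  set e := d - x * (a / (1 + x) + n)
  have h r := hasSum_W_mul_descFactorial (a := a) hx r n
  convert! ((h 2).add ((h 1).mul_left (1 + 2 * e))).add ((h 0).mul_left (e ^ 2)) using 1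
  · funext k
    simp only [cast_descFactorial_eq_prod, prod_range_succ, prod_range_zero]
    ring
  · simp only [pk_succ, pk_zero, e]
    push_cast
    ring

/-- Per geometric summand the cumulants are `x (1 + x)`, `x (1 + x) (1 + 2 x)` and
`x (1 + x) (1 + 6 x + 6 x²)`, those of the Poisson part all equal `a x / (1 + x)`, and the fourth
central moment is `3 κ₂² + κ₄`. -/
lemma hasSum_W_mul_sub_mean_add_pow_four (hx : 0 ≤ x) (n : ℕ) (d : ℝ) :
    HasSum (fun k => W n a x k * ((k : ℝ) - x * (a / (1 + x) + n) + d) ^ 4)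
      (3 * (n * x * (1 + x) + a / (1 + x) * x) ^ 2
        + n * x * (1 + x) * (1 + 6 * x + 6 * x ^ 2) + a / (1 + x) * x
        + 4 * d * (n * x * (1 + x) * (1 + 2 * x) + a / (1 + x) * x)
        + 6 * d ^ 2 * (n * x * (1 + x) + a / (1 + x) * x) + d ^ 4) := by
  set e := d - x * (a / (1 + x) + n)
  have h r := hasSum_W_mul_descFactorial (a := a) hx r n
  convert! ((((h 4).add ((h 3).mul_left (6 + 4 * e))).add
    ((h 2).mul_left (7 + 12 * e + 6 * e ^ 2))).add
    ((h 1).mul_left (1 + 4 * e + 6 * e ^ 2 + 4 * e ^ 3))).add ((h 0).mul_left (e ^ 4)) using 1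
  · funext k
    simp only [cast_descFactorial_eq_prod, prod_range_succ, prod_range_zero]
    ring
  · simp only [pk_succ, pk_zero, e]
    push_cast
    ring

end Weights

section Nodes

variable {a x α β : ℝ} {n : ℕ}

lemma node_sub_eq (hN : (n : ℝ) + β ≠ 0) (k : ℕ) :
    ((k : ℝ) + α) / (n + β) - x =
      ((k : ℝ) - x * (a / (1 + x) + n) + (α - β * x + a / (1 + x) * x)) / (n + β) := by
  field_simp
  ring

lemma hasSum_W_mul_node_sub (hx : 0 ≤ x) (hN : (n : ℝ) + β ≠ 0) :
    HasSum (fun k => W n a x k * (((k : ℝ) + α) / (n + β) - x))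
      ((α - β * x + a / (1 + x) * x) / (n + β)) := by
  simp_rw [node_sub_eq (a := a) (x := x) hN, mul_div_assoc']
  exact (hasSum_W_mul_sub_mean_add hx n _).div_const _

lemma hasSum_W_mul_node_sub_sq (hx : 0 ≤ x) (hN : (n : ℝ) + β ≠ 0) :
    HasSum (fun k => W n a x k * (((k : ℝ) + α) / (n + β) - x) ^ 2)
      ((x * (1 + x) * n + (a / (1 + x) * x + (α - β * x + a / (1 + x) * x) ^ 2)) / (n + β) ^ 2) := by
  simp_rw [node_sub_eq (a := a) (x := x) hN, div_pow, mul_div_assoc']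
  convert! (hasSum_W_mul_sub_mean_add_sq hx n _).div_const _ using 1
  ring

lemma exists_hasSum_W_mul_node_sub_pow_four (hx : 0 ≤ x) :
    ∃ A B C : ℝ, ∀ n : ℕ, (n : ℝ) + β ≠ 0 →
      HasSum (fun k => W n a x k * (((k : ℝ) + α) / (n + β) - x) ^ 4)
        ((A * n ^ 2 + B * n + C) / (n + β) ^ 4) := by
  set c := a / (1 + x) * x
  set d := α - β * x + c
  refine ⟨3 * (x * (1 + x)) ^ 2,
    x * (1 + x) * (6 * c + 1 + 6 * x + 6 * x ^ 2 + 4 * d * (1 + 2 * x) + 6 * d ^ 2),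
    c * (3 * c + 1 + 4 * d + 6 * d ^ 2) + d ^ 4, fun n hN => ?_⟩
  simp_rw [node_sub_eq (a := a) (x := x) hN, div_pow, mul_div_assoc']
  convert! (hasSum_W_mul_sub_mean_add_pow_four hx n d).div_const _ using 1
  ring

end Nodes

lemma tendsto_inv_natCast_add_nhds_zero (β : ℝ) :
    Tendsto (fun n : ℕ => ((n : ℝ) + β)⁻¹) atTop (𝓝 0) :=
  tendsto_inv_atTop_zero.comp (tendsto_atTop_add_const_right _ β tendsto_natCast_atTop_atTop)

lemma tendsto_natCast_mul_div_add (β A : ℝ) :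
    Tendsto (fun n : ℕ => (n : ℝ) * (A / (n + β))) atTop (𝓝 A) := by
  simpa [mul_div_assoc', mul_comm] using (tendsto_natCast_div_add_atTop β).const_mul A

lemma tendsto_natCast_mul_linear_div_add_sq (β A B : ℝ) :
    Tendsto (fun n : ℕ => (n : ℝ) * ((A * n + B) / (n + β) ^ 2)) atTop (𝓝 A) := by
  have hu := tendsto_natCast_div_add_atTop β
  have hv := tendsto_inv_natCast_add_nhds_zero β
  convert ((hu.mul hu).const_mul A).add ((hu.mul hv).const_mul B) using 1
  · funext n
    simp only [div_eq_mul_inv, ← inv_pow]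
    ring
  · simp

lemma tendsto_natCast_mul_quadratic_div_add_pow_four (β A B C : ℝ) :
    Tendsto (fun n : ℕ => (n : ℝ) * ((A * n ^ 2 + B * n + C) / (n + β) ^ 4)) atTop (𝓝 0) := by
  have hu := tendsto_natCast_div_add_atTop β
  have hv := tendsto_inv_natCast_add_nhds_zero β
  convert ((((hu.mul hu).mul hu).const_mul A).add (((hu.mul hu).mul hv).const_mul B)
    |>.add ((hu.mul (hv.mul hv)).const_mul C)).mul hv using 1
  · funext n
    simp only [div_eq_mul_inv, ← inv_pow]
    ring
  · simp

section Taylor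

variable {f f' f'' : ℝ → ℝ} {x t K : ℝ}

lemma abs_sub_sub_mul_le_of_hasDerivAt {g g' : ℝ → ℝ}
    (hg : ∀ u ∈ uIcc x t, HasDerivAt g (g' u) u) (hK : ∀ u ∈ uIcc x t, |g' u - g' x| ≤ K) :
    |g t - g x - g' x * (t - x)| ≤ K * |t - x| := by
  have hψ : ∀ u ∈ uIcc x t,
      HasDerivWithinAt (fun v => g v - g' x * v) (g' u - g' x) (uIcc x t) u := fun u hu =>
    ((hg u hu).sub ((hasDerivAt_id u).const_mul (g' x))).hasDerivWithinAt.congr_deriv (by simp)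
  calc |g t - g x - g' x * (t - x)| = |(g t - g' x * t) - (g x - g' x * x)| := by ring_nf
    _ ≤ K * |t - x| := (convex_uIcc x t).norm_image_sub_le_of_norm_hasDerivWithin_le hψ hK
      left_mem_uIcc right_mem_uIcc

lemma abs_taylor_remainder_le (hd1 : ∀ u ∈ uIcc x t, HasDerivAt f (f' u) u)
    (hd2 : ∀ u ∈ uIcc x t, HasDerivAt f' (f'' u) u) (hK : ∀ u ∈ uIcc x t, |f'' u - f'' x| ≤ K) :
    |f t - f x - f' x * (t - x) - f'' x / 2 * (t - x) ^ 2| ≤ K * (t - x) ^ 2 := by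
  have hK0 : 0 ≤ K := by simpa using hK x left_mem_uIcc
  have h₁ : ∀ u ∈ uIcc x t, |f' u - f' x - f'' x * (u - x)| ≤ K * |t - x| := fun u hu =>
    (abs_sub_sub_mul_le_of_hasDerivAt (fun v hv => hd2 v (uIcc_subset_uIcc_left hu hv))
      fun v hv => hK v (uIcc_subset_uIcc_left hu hv)).trans
      (mul_le_mul_of_nonneg_left (abs_sub_left_of_mem_uIcc hu) hK0)
  have h₂ := abs_sub_sub_mul_le_of_hasDerivAt (g := fun u => f u - f'' x / 2 * (u - x) ^ 2)
    (g' := fun u => f' u - f'' x * (u - x))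
    (fun u hu => ((hd1 u hu).sub ((((hasDerivAt_id u).sub_const x).pow 2).const_mul
      (f'' x / 2))).congr_deriv (by simp; ring))
    (fun u hu => (h₁ u hu).trans_eq' (by ring_nf))
  calc _ = |f t - f'' x / 2 * (t - x) ^ 2 - (f x - f'' x / 2 * (x - x) ^ 2)
        - (f' x - f'' x * (x - x)) * (t - x)| := by ring_nf
    _ ≤ K * |t - x| * |t - x| := h₂
    _ = K * (t - x) ^ 2 := by rw [mul_assoc, ← sq, sq_abs]

lemma UniformContinuousOn.exists_abs_sub_le_add_mul_sq {g : ℝ → ℝ} {s : Set ℝ} {M : ℝ}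
    (hg : UniformContinuousOn g s) (hM : ∀ u ∈ s, |g u| ≤ M) {ε : ℝ} (hε : 0 < ε) :
    ∃ C, 0 ≤ C ∧ ∀ u ∈ s, ∀ v ∈ s, |g u - g v| ≤ ε + C * (u - v) ^ 2 := by
  obtain ⟨δ, hδ, hg⟩ := Metric.uniformContinuousOn_iff.mp hg ε hε
  refine ⟨2 * |M| / δ ^ 2, by positivity, fun u hu v hv => ?_⟩
  rcases lt_or_ge |u - v| δ with huv | huv
  · have := hg u hu v hv huv
    rw [Real.dist_eq] at this
    have : 0 ≤ 2 * |M| / δ ^ 2 * (u - v) ^ 2 := by positivity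
    linarith
  · have hδuv : δ ^ 2 ≤ (u - v) ^ 2 := by
      rw [← sq_abs (u - v)]
      exact pow_le_pow_left₀ hδ.le huv 2
    calc |g u - g v| ≤ |M| + |M| :=
          (abs_sub _ _).trans (add_le_add ((hM u hu).trans (le_abs_self M))
            ((hM v hv).trans (le_abs_self M)))
      _ ≤ 2 * |M| / δ ^ 2 * (u - v) ^ 2 := by
          rw [div_mul_eq_mul_div, le_div_iff₀ (by positivity)]
          nlinarith [abs_nonneg M]
      _ ≤ ε + 2 * |M| / δ ^ 2 * (u - v) ^ 2 := by linarith

lemma exists_abs_taylor_remainder_le {s : Set ℝ} {M ε : ℝ} (hs : s.OrdConnected) (hx : x ∈ s)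
    (hd1 : ∀ u ∈ s, HasDerivAt f (f' u) u) (hd2 : ∀ u ∈ s, HasDerivAt f' (f'' u) u)
    (hM : ∀ u ∈ s, |f'' u| ≤ M) (huc : UniformContinuousOn f'' s) (hε : 0 < ε) :
    ∃ C, ∀ t ∈ s,
      |f t - f x - f' x * (t - x) - f'' x / 2 * (t - x) ^ 2| ≤ ε * (t - x) ^ 2 + C * (t - x) ^ 4 := by
  obtain ⟨C, hC0, hC⟩ := huc.exists_abs_sub_le_add_mul_sq hM hε
  refine ⟨C, fun t ht => ?_⟩
  have hsub : uIcc x t ⊆ s := hs.uIcc_subset hx ht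
  have hK : ∀ u ∈ uIcc x t, |f'' u - f'' x| ≤ ε + C * (t - x) ^ 2 := fun u hu =>
    (hC u (hsub hu) x hx).trans (by
      gcongr ε + C * ?_
      exact sq_le_sq.mpr (abs_sub_left_of_mem_uIcc hu))
  calc _ ≤ (ε + C * (t - x) ^ 2) * (t - x) ^ 2 :=
        abs_taylor_remainder_le (fun u hu => hd1 u (hsub hu)) (fun u hu => hd2 u (hsub hu)) hK
    _ = ε * (t - x) ^ 2 + C * (t - x) ^ 4 := by ring

end Taylor

section Voronovskaya

variable {w : ℕ → ℕ → ℝ}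

lemma tendsto_natCast_mul_tsum_of_abs_le {g u v : ℕ → ℕ → ℝ} {mu mv : ℕ → ℝ} {B : ℝ}
    (hw : ∀ᶠ n in atTop, ∀ k, 0 ≤ w n k)
    (hu : ∀ᶠ n in atTop, HasSum (fun k => w n k * u n k) (mu n))
    (hv : ∀ᶠ n in atTop, HasSum (fun k => w n k * v n k) (mv n))
    (hmu : Tendsto (fun n : ℕ => (n : ℝ) * mu n) atTop (𝓝 B))
    (hmv : Tendsto (fun n : ℕ => (n : ℝ) * mv n) atTop (𝓝 0))
    (hg : ∀ ε > 0, ∃ C, ∀ᶠ n in atTop, ∀ k, |g n k| ≤ ε * u n k + C * v n k) :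
    Tendsto (fun n : ℕ => (n : ℝ) * ∑' k, w n k * g n k) atTop (𝓝 0) := by
  rw [NormedAddGroup.tendsto_nhds_zero]
  intro η hη
  set ε := η / (2 * (|B| + 1))
  obtain ⟨C, hC⟩ := hg ε (by positivity)
  have hlt : ε * B + C * 0 < η := by
    have : ε * B ≤ ε * |B| := mul_le_mul_of_nonneg_left (le_abs_self B) (by positivity)
    have : ε * |B| < η := by
      rw [div_mul_eq_mul_div, div_lt_iff₀ (by positivity)]
      nlinarith [abs_nonneg B]
    linarith
  have hlim := ((hmu.const_mul ε).add (hmv.const_mul C)).eventually (gt_mem_nhds hlt)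
  filter_upwards [hw, hu, hv, hC, hlim] with n hwn hun hvn hCn hlimn
  have hbound : ‖∑' k, w n k * g n k‖ ≤ ε * mu n + C * mv n :=
    tsum_of_norm_bounded ((hun.mul_left ε).add (hvn.mul_left C)) fun k => by
      rw [norm_mul, Real.norm_of_nonneg (hwn k), Real.norm_eq_abs]
      linarith [mul_le_mul_of_nonneg_left (hCn k) (hwn k)]
  rw [norm_mul, Real.norm_natCast]
  calc (n : ℝ) * ‖∑' k, w n k * g n k‖ ≤ n * (ε * mu n + C * mv n) := by gcongr
    _ = ε * (n * mu n) + C * (n * mv n) := by ring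
    _ < η := hlimn

theorem tendsto_natCast_mul_tsum_sub_of_moments {t : ℕ → ℕ → ℝ} {f f' f'' : ℝ → ℝ}
    {x A B : ℝ} {m₁ m₂ m₄ : ℕ → ℝ}
    (hw : ∀ᶠ n in atTop, ∀ k, 0 ≤ w n k)
    (h₀ : ∀ᶠ n in atTop, HasSum (w n) 1)
    (h₁ : ∀ᶠ n in atTop, HasSum (fun k => w n k * (t n k - x)) (m₁ n))
    (h₂ : ∀ᶠ n in atTop, HasSum (fun k => w n k * (t n k - x) ^ 2) (m₂ n))
    (h₄ : ∀ᶠ n in atTop, HasSum (fun k => w n k * (t n k - x) ^ 4) (m₄ n))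
    (hA : Tendsto (fun n : ℕ => (n : ℝ) * m₁ n) atTop (𝓝 A))
    (hB : Tendsto (fun n : ℕ => (n : ℝ) * m₂ n) atTop (𝓝 B))
    (h0 : Tendsto (fun n : ℕ => (n : ℝ) * m₄ n) atTop (𝓝 0))
    (hR : ∀ ε > 0, ∃ C, ∀ᶠ n in atTop, ∀ k,
      |f (t n k) - f x - f' x * (t n k - x) - f'' x / 2 * (t n k - x) ^ 2|
        ≤ ε * (t n k - x) ^ 2 + C * (t n k - x) ^ 4) :
    Tendsto (fun n : ℕ => (n : ℝ) * (∑' k, w n k * f (t n k) - f x)) atTop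
      (𝓝 (A * f' x + B / 2 * f'' x)) := by
  have hlim := ((tendsto_natCast_mul_tsum_of_abs_le hw h₂ h₄ hB h0 hR).add
    (hA.const_mul (f' x))).add (hB.const_mul (f'' x / 2))
  rw [show 0 + f' x * A + f'' x / 2 * B = A * f' x + B / 2 * f'' x by ring] at hlim
  refine hlim.congr' ?_
  obtain ⟨C, hC⟩ := hR 1 one_pos
  filter_upwards [hw, h₀, h₁, h₂, h₄, hC] with n hwn h₀n h₁n h₂n h₄n hCn
  have hsum : Summable fun k => w n k *
      (f (t n k) - f x - f' x * (t n k - x) - f'' x / 2 * (t n k - x) ^ 2) :=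
    Summable.of_norm_bounded (((h₂n.mul_left 1).add (h₄n.mul_left C)).summable) fun k => by
      rw [norm_mul, Real.norm_of_nonneg (hwn k), Real.norm_eq_abs]
      linarith [mul_le_mul_of_nonneg_left (hCn k) (hwn k)]
  have hf : HasSum (fun k => w n k * f (t n k)) _ :=
    (((hsum.hasSum.add (h₀n.mul_left (f x))).add (h₁n.mul_left (f' x))).add
      (h₂n.mul_left (f'' x / 2))).congr_fun fun k => by ring
  rw [hf.tsum_eq]
  ring

end Voronovskaya

theorem stancu_voronovskaya_general (a x α β : ℝ) (ha : 0 ≤ a) (hx : 0 ≤ x)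
    (hα : 0 ≤ α)
    (f f' f'' : ℝ → ℝ)
    (hd1 : ∀ t, 0 ≤ t → HasDerivAt f (f' t) t)
    (hd2 : ∀ t, 0 ≤ t → HasDerivAt f' (f'' t) t)
    (hf''b : ∃ M : ℝ, ∀ t, 0 ≤ t → |f'' t| ≤ M)
    (hf''uc : UniformContinuousOn f'' (Set.Ici 0)) :
    Filter.Tendsto (fun n : ℕ => (n : ℝ) * (L n a α β f x - f x)) Filter.atTop
      (nhds ((α - β * x + a * x / (1 + x)) * f' x + ((x ^ 2 + x) / 2) * f'' x)) := by
  obtain ⟨M, hM⟩ := hf''b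
  obtain ⟨A₄, B₄, C₄, h₄⟩ := exists_hasSum_W_mul_node_sub_pow_four (a := a) (α := α) (β := β) hx
  have hN : ∀ᶠ n : ℕ in atTop, 0 < (n : ℝ) + β :=
    (tendsto_atTop_add_const_right _ β tendsto_natCast_atTop_atTop).eventually_gt_atTop 0
  have hR (ε : ℝ) (hε : 0 < ε) := (exists_abs_taylor_remainder_le ordConnected_Ici hx hd1 hd2 hM
    hf''uc hε).imp fun C hC => hN.mono fun n hn (k : ℕ) => hC (((k : ℝ) + α) / (n + β))
      (div_nonneg (by positivity) hn.le)
  convert! tendsto_natCast_mul_tsum_sub_of_moments (w := fun n => W n a x)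
    (Eventually.of_forall fun n => W_nonneg n ha hx) (Eventually.of_forall fun n => hasSum_W n hx)
    (hN.mono fun n hn => hasSum_W_mul_node_sub hx hn.ne')
    (hN.mono fun n hn => hasSum_W_mul_node_sub_sq hx hn.ne')
    (hN.mono fun n hn => h₄ n hn.ne')
    (tendsto_natCast_mul_div_add β _) (tendsto_natCast_mul_linear_div_add_sq β _ _)
    (tendsto_natCast_mul_quadratic_div_add_pow_four β A₄ B₄ C₄) hR using 2
  ring

theorem stancu_voronovskaya (a x α β : ℝ) (ha : 0 ≤ a) (hx : 0 ≤ x)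
    (hα : 0 ≤ α) (hαβ : α ≤ β)
    (f f' f'' : ℝ → ℝ)
    (hfb : ∃ M : ℝ, ∀ t, 0 ≤ t → |f t| ≤ M)
    (hd1 : ∀ t, 0 ≤ t → HasDerivAt f (f' t) t)
    (hd2 : ∀ t, 0 ≤ t → HasDerivAt f' (f'' t) t)
    (hf''b : ∃ M : ℝ, ∀ t, 0 ≤ t → |f'' t| ≤ M)
    (hf''uc : UniformContinuousOn f'' (Set.Ici 0)) :
    Filter.Tendsto (fun n : ℕ => (n : ℝ) * (L n a α β f x - f x)) Filter.atTop
      (nhds ((α - β * x + a * x / (1 + x)) * f' x + ((x ^ 2 + x) / 2) * f'' x)) :=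
  stancu_voronovskaya_general a x α β ha hx hα f f' f'' hd1 hd2 hf''b hf''uc
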